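/- For any U on the Stiefel manifold and any tangent vector ξ ∈ T_U M, the polar retraction satisfies ‖Retr_U(ξ) − U‖_F ≤ 2‖ξ‖_F. -/

import Mathlib

open Matrix BigOperators

/-- The old Mathlib `Matrix.PosSemidef.sqrt` (removed upstream), with its old definition. -/
noncomputable def Matrix.PosSemidef.sqrt {n 𝕜 : Type*} [Fintype n] [DecidableEq n] [RCLike 𝕜]
    [PartialOrder 𝕜]
    {A : Matrix n n 𝕜} (hA : Matrix.PosSemidef A) : Matrix n n 𝕜 :=
  hA.1.eigenvectorUnitary.1 * diagonal ((↑) ∘ (√·) ∘ hA.1.eigenvalues) *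
    (star hA.1.eigenvectorUnitary : Matrix n n 𝕜)

noncomputable def frob {m k : ℕ} (A : Matrix (Fin m) (Fin k) ℝ) : ℝ :=
  Real.sqrt (∑ i, ∑ j, (A i j) ^ 2)

lemma frob_nonneg {m k : ℕ} (A : Matrix (Fin m) (Fin k) ℝ) : 0 ≤ frob A :=
  Real.sqrt_nonneg _

lemma frob_sq {m k : ℕ} (A : Matrix (Fin m) (Fin k) ℝ) :
    frob A ^ 2 = trace (Aᵀ * A) := by
  rw [frob, Real.sq_sqrt (by positivity)]
  simp [Matrix.trace, Matrix.mul_apply, Matrix.diag, pow_two]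
  rw [Finset.sum_comm]

lemma frob_add_le {m k : ℕ} (A B : Matrix (Fin m) (Fin k) ℝ) :
    frob (A + B) ≤ frob A + frob B := by
  letI : SeminormedAddCommGroup (Matrix (Fin m) (Fin k) ℝ) :=
    Matrix.frobeniusSeminormedAddCommGroup
  have hf : ∀ M : Matrix (Fin m) (Fin k) ℝ, frob M = ‖M‖ := by
    intro M
    rw [Matrix.frobenius_norm_def, frob, Real.sqrt_eq_rpow]
    congr 1
    simp [Real.norm_eq_abs, sq_abs]
  rw [hf, hf, hf]
  exact norm_add_le A B

lemma eig_ge_one {C : ℕ} (B : Matrix (Fin C) (Fin C) ℝ) (hB : B.PosSemidef)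
    (hA : (1 + B).IsHermitian) (i : Fin C) : 1 ≤ hA.eigenvalues i := by
  have hv := hA.eigenvalues_eq i
  set v : EuclideanSpace ℝ (Fin C) := hA.eigenvectorBasis i with hvdef
  have hnorm : ‖v‖ = 1 := hA.eigenvectorBasis.orthonormal.1 i
  have hsum : ∑ x, v x * v x = 1 := by
    have h := EuclideanSpace.norm_eq v
    rw [hnorm] at h
    have := Real.sqrt_eq_one.mp h.symm
    simpa [Real.norm_eq_abs, sq_abs, pow_two] using this
  have h1 : star (⇑v) ⬝ᵥ (⇑v) = 1 := by simpa [dotProduct] using hsum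
  have h2 : 0 ≤ star (⇑v) ⬝ᵥ (B *ᵥ ⇑v) := hB.dotProduct_mulVec_nonneg ⇑v
  rw [hv]
  simp only [add_mulVec, one_mulVec, dotProduct_add, h1, RCLike.re_to_real]
  linarith

lemma trace_sqrt_ge {C : ℕ} (B : Matrix (Fin C) (Fin C) ℝ) (hB : B.PosSemidef)
    (hpsd : (1 + B).PosSemidef) : (C : ℝ) ≤ trace hpsd.sqrt := by
  have hA := hpsd.1
  rw [Matrix.PosSemidef.sqrt]
  rw [Matrix.trace_mul_cycle]
  rw [show (star (hA.eigenvectorUnitary : Matrix (Fin C) (Fin C) ℝ)) *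
      (hA.eigenvectorUnitary : Matrix (Fin C) (Fin C) ℝ) = 1 from
    Unitary.coe_star_mul_self hA.eigenvectorUnitary, one_mul, Matrix.trace_diagonal]
  calc (C : ℝ) = ∑ _i : Fin C, (1 : ℝ) := by simp
    _ ≤ _ := by
        apply Finset.sum_le_sum
        intro i _
        simpa using Real.one_le_sqrt.mpr (eig_ge_one B hB hA i)

lemma psd_sqrt_posSemidef {C : ℕ} {A : Matrix (Fin C) (Fin C) ℝ} (hA : A.PosSemidef) :
    hA.sqrt.PosSemidef := by
  unfold Matrix.PosSemidef.sqrt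
  have hd : (diagonal ((↑) ∘ (√·) ∘ hA.1.eigenvalues) : Matrix (Fin C) (Fin C) ℝ).PosSemidef :=
    Matrix.posSemidef_diagonal_iff.mpr (fun i => by simp [Real.sqrt_nonneg])
  exact hd.mul_mul_conjTranspose_same (hA.1.eigenvectorUnitary : Matrix (Fin C) (Fin C) ℝ)

lemma psd_sqrt_mul_self {C : ℕ} {A : Matrix (Fin C) (Fin C) ℝ} (hA : A.PosSemidef) :
    hA.sqrt * hA.sqrt = A := by
  unfold Matrix.PosSemidef.sqrt
  have hVV : star (hA.1.eigenvectorUnitary : Matrix (Fin C) (Fin C) ℝ) *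
      (hA.1.eigenvectorUnitary : Matrix (Fin C) (Fin C) ℝ) = 1 := Unitary.coe_star_mul_self _
  have hE : (diagonal ((RCLike.ofReal : ℝ → ℝ) ∘ (√·) ∘ hA.1.eigenvalues) : Matrix (Fin C) (Fin C) ℝ) *
      diagonal ((RCLike.ofReal : ℝ → ℝ) ∘ (√·) ∘ hA.1.eigenvalues) = diagonal (RCLike.ofReal ∘ hA.1.eigenvalues) := by
    rw [diagonal_mul_diagonal]; congr 1; funext i
    simp [Real.mul_self_sqrt (hA.eigenvalues_nonneg i)]
  conv_rhs => rw [hA.1.spectral_theorem, Unitary.conjStarAlgAut_apply]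
  rw [← hE]
  calc _ = (hA.1.eigenvectorUnitary : Matrix (Fin C) (Fin C) ℝ) *
        diagonal ((RCLike.ofReal : ℝ → ℝ) ∘ (√·) ∘ hA.1.eigenvalues) *
        (star (hA.1.eigenvectorUnitary : Matrix (Fin C) (Fin C) ℝ) *
          (hA.1.eigenvectorUnitary : Matrix (Fin C) (Fin C) ℝ)) *
        diagonal ((RCLike.ofReal : ℝ → ℝ) ∘ (√·) ∘ hA.1.eigenvalues) *
        star (hA.1.eigenvectorUnitary : Matrix (Fin C) (Fin C) ℝ) := by
          simp only [Matrix.mul_assoc]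
    _ = _ := by rw [hVV, Matrix.mul_one]; simp only [Matrix.mul_assoc]

/-- First-order bound for the polar retraction on the Stiefel manifold:
‖Retr_U(ξ) − U‖_F ≤ 2‖ξ‖_F, where Retr_U(ξ) = (U+ξ)(I + ξᵀξ)^{−1/2}. -/
theorem stmt_12 (n C : ℕ) (U ξ : Matrix (Fin n) (Fin C) ℝ)
    (hU : Uᵀ * U = 1) (hξ : ξᵀ * U + Uᵀ * ξ = 0)
    (hpsd : (1 + ξᵀ * ξ).PosSemidef) :
    frob ((U + ξ) * hpsd.sqrt⁻¹ - U) ≤ 2 * frob ξ := by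
  set S := hpsd.sqrt with hSdef
  have hB : (ξᵀ * ξ).PosSemidef := Matrix.posSemidef_conjTranspose_mul_self ξ
  have hSpsd : S.PosSemidef := psd_sqrt_posSemidef hpsd
  have hSS : S * S = 1 + ξᵀ * ξ := psd_sqrt_mul_self hpsd
  have hPD : (1 + ξᵀ * ξ).PosDef := Matrix.PosDef.one.add_posSemidef hB
  have hdet : IsUnit S.det := by
    have h : S.det * S.det = (1 + ξᵀ * ξ).det := by rw [← Matrix.det_mul, hSS]
    have hpos : 0 < (1 + ξᵀ * ξ).det := hPD.det_pos
    refine isUnit_iff_ne_zero.mpr fun h0 => ?_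
    rw [h0, mul_zero] at h
    exact absurd h.symm (ne_of_gt hpos)
  have hSinv : S * S⁻¹ = 1 := Matrix.mul_nonsing_inv S hdet
  have hinvS : S⁻¹ * S = 1 := Matrix.nonsing_inv_mul S hdet
  have hSsymm : Sᵀ = S := by
    have := hSpsd.1
    rwa [Matrix.IsHermitian, Matrix.conjTranspose_eq_transpose_of_trivial] at this
  have hSinvsymm : (S⁻¹)ᵀ = S⁻¹ := by rw [Matrix.transpose_nonsing_inv, hSsymm]
  set D : Matrix (Fin C) (Fin C) ℝ := S⁻¹ - 1 with hDdef
  have hDsymm : Dᵀ = D := by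
    rw [hDdef, Matrix.transpose_sub, Matrix.transpose_one, hSinvsymm]
  have hsplit : (U + ξ) * S⁻¹ - U = (U + ξ) * D + ξ := by
    rw [hDdef, Matrix.mul_sub, Matrix.mul_one]
    abel
  have hGram : (U + ξ)ᵀ * (U + ξ) = S * S := by
    rw [hSS, Matrix.transpose_add, Matrix.add_mul, Matrix.mul_add, Matrix.mul_add, hU]
    have : ξᵀ * U + Uᵀ * ξ = 0 := hξ
    rw [add_assoc, ← add_assoc (Uᵀ * ξ), add_comm (Uᵀ * ξ) (ξᵀ * U), this]
    abel
  have hDS : D * S = 1 - S := by rw [hDdef, Matrix.sub_mul, hinvS, Matrix.one_mul]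
  have hSD : S * D = 1 - S := by rw [hDdef, Matrix.mul_sub, hSinv, Matrix.mul_one]
  -- square of frob of the first piece
  have hsq : frob ((U + ξ) * D) ^ 2 = (C : ℝ) - 2 * trace S + trace (S * S) := by
    rw [frob_sq, Matrix.transpose_mul, hDsymm]
    have e1 : D * (U + ξ)ᵀ * ((U + ξ) * D) = (1 - S) * (1 - S) := by
      calc D * (U + ξ)ᵀ * ((U + ξ) * D)
          = D * ((U + ξ)ᵀ * (U + ξ)) * D := by simp only [Matrix.mul_assoc]
        _ = (D * S) * (S * D) := by rw [hGram]; simp only [Matrix.mul_assoc]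
        _ = (1 - S) * (1 - S) := by rw [hDS, hSD]
    rw [e1]
    have e2 : (1 - S) * (1 - S) = 1 - S - S + S * S := by noncomm_ring
    rw [e2, Matrix.trace_add, Matrix.trace_sub, Matrix.trace_sub, Matrix.trace_one]
    simp only [Fintype.card_fin]
    ring
  have hfξ : frob ξ ^ 2 = trace (S * S) - (C : ℝ) := by
    rw [frob_sq, hSS, Matrix.trace_add, Matrix.trace_one]
    simp only [Fintype.card_fin]
    ring
  have htr : (C : ℝ) ≤ trace S := trace_sqrt_ge (ξᵀ * ξ) hB hpsd
  have hle2 : frob ((U + ξ) * D) ^ 2 ≤ frob ξ ^ 2 := by rw [hsq, hfξ]; linarith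
  have hkey : frob ((U + ξ) * D) ≤ frob ξ := by
    have h := Real.sqrt_le_sqrt hle2
    rwa [Real.sqrt_sq (frob_nonneg _), Real.sqrt_sq (frob_nonneg _)] at h
  rw [hsplit]
  calc frob ((U + ξ) * D + ξ) ≤ frob ((U + ξ) * D) + frob ξ := frob_add_le _ _
    _ ≤ frob ξ + frob ξ := by linarith
    _ = 2 * frob ξ := by ring
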